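/- Let X be a real Hilbert space regarded as a Jordan triple with triple product {x,y,z} := (1/2)(⟨x,y⟩z + ⟨z,y⟩x), and let J : X → X* be the Riesz map J(x)(y) := ⟨y,x⟩. For a linear map δ : X → X*, setting T := J⁻¹∘δ : X → X, the following are equivalent: (a) δ is a ternary derivation from X to X*; (b) T is a bounded linear operator satisfying ⟨Tx,y⟩ = −⟨x,Ty⟩ for all x,y ∈ X (i.e. T* = −T). -/
import Mathlib


/-!
STATEMENT 14: Let `X` be a real Hilbert space, a Jordan triple under
`{x,y,z} := (1/2)(⟨x,y⟩z + ⟨z,y⟩x)`, and let `J : X → X*` be the Riesz map.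
For a linear map `δ : X → X*` and `T := J⁻¹∘δ`, the following are equivalent:
(a) `δ` is a ternary derivation from `X` to `X*`;
(b) `T` is a bounded (continuous) linear operator with `⟨Tx,y⟩ = −⟨x,Ty⟩` for all `x,y`.
-/

open scoped RealInnerProductSpace

noncomputable section

variable {X : Type*} [NormedAddCommGroup X] [InnerProductSpace ℝ X] [CompleteSpace X]

/-- The triple product `{x,y,z} = (1/2)(⟨x,y⟩z + ⟨z,y⟩x)` on a real Hilbert space. -/
def jtripR (a b c : X) : X := (2 : ℝ)⁻¹ • (⟪a, b⟫ • c + ⟪c, b⟫ • a)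

/-- A map `δ : X → X*` is a ternary derivation:
`δ{a,b,c} = {δ(a),b,c} + {a,δ(b),c} + {a,b,δ(c)}`, written out pointwise on `X*`,
where `{a,b,φ}(x) = {φ,b,a}(x) := φ({b,a,x})` and `{a,φ,b}(x) := φ({a,x,b})`. -/
def IsTernaryDerFunR (δ : X → (X →L[ℝ] ℝ)) : Prop :=
  ∀ a b c x : X, δ (jtripR a b c) x
    = δ a (jtripR b c x) + δ b (jtripR a x c) + δ c (jtripR b a x)

/-- For a linear `δ : X → X*` with `T := J⁻¹∘δ` (`J` the Riesz map): `δ` is a ternary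
derivation iff `T` is a bounded operator with `T* = −T`. -/
theorem ternaryDer_iff_skew_adjoint
    (δ : X →ₗ[ℝ] (X →L[ℝ] ℝ))
    (T : X → X) (hT : ∀ x, T x = (InnerProductSpace.toDual ℝ X).symm (δ x)) :
    IsTernaryDerFunR ⇑δ ↔
      (Continuous T ∧ ∀ x y : X, ⟪T x, y⟫ = - ⟪x, T y⟫) := by
  have hδ : ∀ a y : X, (δ a) y = ⟪y, T a⟫ := by
    intro a y
    rw [real_inner_comm, hT, InnerProductSpace.toDual_symm_apply]
  -- T is linear
  have hTadd : ∀ x y : X, T (x + y) = T x + T y := by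
    intro x y; simp [hT, map_add]
  have hTsmul : ∀ (c : ℝ) (x : X), T (c • x) = c • T x := by
    intro c x; simp [hT, map_smul]
  let Tlin : X →ₗ[ℝ] X :=
    { toFun := T, map_add' := hTadd, map_smul' := hTsmul }
  constructor
  · intro hder
    have hskew : ∀ a b : X, ⟪T a, b⟫ = - ⟪a, T b⟫ := by
      intro a b
      rcases eq_or_ne a 0 with rfl | ha
      · have h0 : T (0 : X) = 0 := by simpa using hTsmul 0 0
        simp [h0]
      · have key := hder a b a a
        simp only [jtripR, map_add, map_smul, LinearMap.add_apply,
          LinearMap.smul_apply, ContinuousLinearMap.add_apply,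
          ContinuousLinearMap.coe_smul', Pi.smul_apply,
          ContinuousLinearMap.map_add, ContinuousLinearMap.map_smul,
          smul_eq_mul] at key
        simp only [hδ] at key
        have hcomm := real_inner_comm a b
        have haa : ⟪a, a⟫ ≠ 0 := by
          simpa [inner_self_eq_zero] using ha
        have h1 : ⟪a, a⟫ * (⟪b, T a⟫ + ⟪a, T b⟫) = 0 := by
          linear_combination (-1 : ℝ) * key - ⟪a, T a⟫ * hcomm
        have h2 : ⟪b, T a⟫ + ⟪a, T b⟫ = 0 := by
          rcases mul_eq_zero.mp h1 with h | h
          · exact absurd h haa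
          · exact h
        have h3 := real_inner_comm (T a) b
        have h4 := real_inner_comm b (T a)
        linarith
    constructor
    · -- continuity via Hellinger–Toeplitz for T ∘ T
      have hsymm : (Tlin ∘ₗ Tlin).IsSymmetric := by
        intro x y
        have h1 := hskew (T x) y
        have h2 := hskew x (T y)
        simp only [LinearMap.coe_comp, Function.comp_apply, LinearMap.coe_mk,
          AddHom.coe_mk, Tlin, RCLike.inner_apply, conj_trivial] at *
        linarith
      have hc : Continuous (Tlin ∘ₗ Tlin) := hsymm.continuous
      obtain ⟨C, hC0, hC⟩ := SemilinearMapClass.bound_of_continuous (Tlin ∘ₗ Tlin) hc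
      have hb : ∀ x : X, ‖T x‖ ≤ Real.sqrt C * ‖x‖ := by
        intro x
        have h1 : ‖T x‖ ^ 2 = ⟪T x, T x⟫ := (real_inner_self_eq_norm_sq _).symm
        have h2 : ⟪T x, T x⟫ = - ⟪x, T (T x)⟫ := hskew x (T x)
        have h3 : - ⟪x, T (T x)⟫ ≤ ‖x‖ * ‖T (T x)‖ := by
          have := abs_real_inner_le_norm x (T (T x))
          have := neg_abs_le (⟪x, T (T x)⟫)
          linarith
        have h4 : ‖T (T x)‖ ≤ C * ‖x‖ := hC x
        have h5 : ‖T x‖ ^ 2 ≤ C * ‖x‖ ^ 2 := by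
          nlinarith [norm_nonneg x]
        have h6 : ‖T x‖ ^ 2 ≤ (Real.sqrt C * ‖x‖) ^ 2 := by
          rw [mul_pow, Real.sq_sqrt hC0.le]; exact h5
        have h7 := Real.sqrt_le_sqrt h6
        rwa [Real.sqrt_sq (norm_nonneg _), Real.sqrt_sq
          (by positivity : (0:ℝ) ≤ Real.sqrt C * ‖x‖)] at h7
      exact AddMonoidHomClass.continuous_of_bound Tlin (Real.sqrt C) hb
    · exact hskew
  · rintro ⟨-, hskew⟩ a b c x
    have hskew' : ∀ u v : X, ⟪u, T v⟫ = - ⟪v, T u⟫ := by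
      intro u v
      linarith [hskew v u, real_inner_comm u (T v), real_inner_comm (T v) u]
    simp only [jtripR, map_add, map_smul, LinearMap.add_apply,
      LinearMap.smul_apply, ContinuousLinearMap.add_apply,
      ContinuousLinearMap.coe_smul', Pi.smul_apply,
      ContinuousLinearMap.map_add, ContinuousLinearMap.map_smul,
      smul_eq_mul]
    simp only [hδ]
    linear_combination
      (2⁻¹ * ⟪x, T c⟫) * (real_inner_comm a b)
      + (2⁻¹ * ⟪x, T a⟫) * (real_inner_comm c b)
      - (2⁻¹ * ⟪x, c⟫) * (hskew' b a)
      + (2⁻¹ * ⟪a, T b⟫) * (real_inner_comm c x)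
      - (2⁻¹ * ⟪x, a⟫) * (hskew' c b)
      + (2⁻¹ * ⟪b, T c⟫) * (real_inner_comm a x)
      - ⟪x, T c⟫ * (real_inner_comm a b)
      - ⟪x, T a⟫ * (real_inner_comm c b)
      - (2⁻¹ * (⟪c, T b⟫ - ⟪b, T c⟫)) * (real_inner_comm x a)
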